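/- Let C ∈ ℝ, let f be a smooth real-valued function of three variables (x,y,p), and let η be a smooth function of (x,y) with ∂η/∂y ≠ 0. Suppose that for all (x,y,p): η_xx + 2p·η_xy + p²·η_yy + f(x,y,p)·η_y = (x + C)·η(x,y), i.e., the transformation x̄ = x + C, ȳ = η(x,y) maps y'' = f(x,y,y') to the Airy equation ȳ'' = x̄·ȳ. Then for all (x,y,p): x + C = f_y - (1/2)·f_{xp} - (1/2)·f_{pp}·f + (1/4)·(f_p)² - (1/2)·p·f_{yp}. -/

import Mathlib

/-- Partial derivative in the first variable `x` of `g(x,y,p)`. -/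
noncomputable def pX (g : ℝ → ℝ → ℝ → ℝ) (x y p : ℝ) : ℝ :=
  deriv (fun t => g t y p) x

/-- Partial derivative in the second variable `y` of `g(x,y,p)`. -/
noncomputable def pY (g : ℝ → ℝ → ℝ → ℝ) (x y p : ℝ) : ℝ :=
  deriv (fun t => g x t p) y

/-- Partial derivative in the third variable `p` of `g(x,y,p)`. -/
noncomputable def pP (g : ℝ → ℝ → ℝ → ℝ) (x y p : ℝ) : ℝ :=
  deriv (fun t => g x y t) p

/-- Partial derivative in the first variable `x` of `η(x,y)`. -/
noncomputable def eX (η : ℝ → ℝ → ℝ) (x y : ℝ) : ℝ :=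
  deriv (fun t => η t y) x

/-- Partial derivative in the second variable `y` of `η(x,y)`. -/
noncomputable def eY (η : ℝ → ℝ → ℝ) (x y : ℝ) : ℝ :=
  deriv (fun t => η x t) y

noncomputable def D1 (G : ℝ × ℝ → ℝ) : ℝ × ℝ → ℝ := fun q => fderiv ℝ G q (1, 0)
noncomputable def D2 (G : ℝ × ℝ → ℝ) : ℝ × ℝ → ℝ := fun q => fderiv ℝ G q (0, 1)
noncomputable def E1 (G : ℝ × ℝ × ℝ → ℝ) : ℝ × ℝ × ℝ → ℝ := fun q => fderiv ℝ G q (1, 0, 0)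
noncomputable def E2 (G : ℝ × ℝ × ℝ → ℝ) : ℝ × ℝ × ℝ → ℝ := fun q => fderiv ℝ G q (0, 1, 0)
noncomputable def E3 (G : ℝ × ℝ × ℝ → ℝ) : ℝ × ℝ × ℝ → ℝ := fun q => fderiv ℝ G q (0, 0, 1)

lemma contDiff_clm_part {E : Type*} [NormedAddCommGroup E] [NormedSpace ℝ E]
    (G : E → ℝ) (hG : ContDiff ℝ (⊤ : ℕ∞) G) (v : E) :
    ContDiff ℝ (⊤ : ℕ∞) (fun q => fderiv ℝ G q v) :=
  (hG.fderiv_right (by simp)).clm_apply contDiff_const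

lemma D1_contDiff (G : ℝ × ℝ → ℝ) (hG : ContDiff ℝ (⊤ : ℕ∞) G) : ContDiff ℝ (⊤ : ℕ∞) (D1 G) :=
  contDiff_clm_part G hG _
lemma D2_contDiff (G : ℝ × ℝ → ℝ) (hG : ContDiff ℝ (⊤ : ℕ∞) G) : ContDiff ℝ (⊤ : ℕ∞) (D2 G) :=
  contDiff_clm_part G hG _
lemma E1_contDiff (G : ℝ × ℝ × ℝ → ℝ) (hG : ContDiff ℝ (⊤ : ℕ∞) G) : ContDiff ℝ (⊤ : ℕ∞) (E1 G) :=
  contDiff_clm_part G hG _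
lemma E2_contDiff (G : ℝ × ℝ × ℝ → ℝ) (hG : ContDiff ℝ (⊤ : ℕ∞) G) : ContDiff ℝ (⊤ : ℕ∞) (E2 G) :=
  contDiff_clm_part G hG _
lemma E3_contDiff (G : ℝ × ℝ × ℝ → ℝ) (hG : ContDiff ℝ (⊤ : ℕ∞) G) : ContDiff ℝ (⊤ : ℕ∞) (E3 G) :=
  contDiff_clm_part G hG _

lemma hasDerivAt_D1 (G : ℝ × ℝ → ℝ) (hG : Differentiable ℝ G) (x y : ℝ) :
    HasDerivAt (fun t => G (t, y)) (D1 G (x, y)) x := by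
  have hin : HasDerivAt (fun t : ℝ => ((t, y) : ℝ × ℝ)) (1, 0) x :=
    (hasDerivAt_id x).prodMk (hasDerivAt_const x y)
  exact (hG (x, y)).hasFDerivAt.comp_hasDerivAt x hin

lemma hasDerivAt_D2 (G : ℝ × ℝ → ℝ) (hG : Differentiable ℝ G) (x y : ℝ) :
    HasDerivAt (fun t => G (x, t)) (D2 G (x, y)) y := by
  have hin : HasDerivAt (fun t : ℝ => ((x, t) : ℝ × ℝ)) (0, 1) y :=
    (hasDerivAt_const y x).prodMk (hasDerivAt_id y)
  exact (hG (x, y)).hasFDerivAt.comp_hasDerivAt y hin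

lemma hasDerivAt_E1 (G : ℝ × ℝ × ℝ → ℝ) (hG : Differentiable ℝ G) (x y p : ℝ) :
    HasDerivAt (fun t => G (t, y, p)) (E1 G (x, y, p)) x := by
  have hin : HasDerivAt (fun t : ℝ => ((t, y, p) : ℝ × ℝ × ℝ)) (1, 0, 0) x :=
    (hasDerivAt_id x).prodMk ((hasDerivAt_const x y).prodMk (hasDerivAt_const x p))
  exact (hG (x, y, p)).hasFDerivAt.comp_hasDerivAt x hin

lemma hasDerivAt_E2 (G : ℝ × ℝ × ℝ → ℝ) (hG : Differentiable ℝ G) (x y p : ℝ) :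
    HasDerivAt (fun t => G (x, t, p)) (E2 G (x, y, p)) y := by
  have hin : HasDerivAt (fun t : ℝ => ((x, t, p) : ℝ × ℝ × ℝ)) (0, 1, 0) y :=
    (hasDerivAt_const y x).prodMk ((hasDerivAt_id y).prodMk (hasDerivAt_const y p))
  exact (hG (x, y, p)).hasFDerivAt.comp_hasDerivAt y hin

lemma hasDerivAt_E3 (G : ℝ × ℝ × ℝ → ℝ) (hG : Differentiable ℝ G) (x y p : ℝ) :
    HasDerivAt (fun t => G (x, y, t)) (E3 G (x, y, p)) p := by
  have hin : HasDerivAt (fun t : ℝ => ((x, y, t) : ℝ × ℝ × ℝ)) (0, 0, 1) p :=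
    (hasDerivAt_const p x).prodMk ((hasDerivAt_const p y).prodMk (hasDerivAt_id p))
  exact (hG (x, y, p)).hasFDerivAt.comp_hasDerivAt p hin

lemma fderiv_part_apply (G : ℝ × ℝ → ℝ) (hG : ContDiff ℝ (⊤ : ℕ∞) G) (q : ℝ × ℝ) (v w : ℝ × ℝ) :
    fderiv ℝ (fun q => fderiv ℝ G q v) q w = fderiv ℝ (fderiv ℝ G) q w v := by
  have hdf : Differentiable ℝ (fderiv ℝ G) :=
    (hG.fderiv_right (m := (⊤ : ℕ∞)) (by simp)).differentiable (by simp)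
  have h : HasFDerivAt (fun q => fderiv ℝ G q v)
      ((ContinuousLinearMap.apply ℝ ℝ v).comp (fderiv ℝ (fderiv ℝ G) q)) q :=
    ((ContinuousLinearMap.apply ℝ ℝ v).hasFDerivAt).comp q (hdf q).hasFDerivAt
  rw [h.fderiv]; rfl

lemma D_symm (G : ℝ × ℝ → ℝ) (hG : ContDiff ℝ (⊤ : ℕ∞) G) (q : ℝ × ℝ) :
    D1 (D2 G) q = D2 (D1 G) q := by
  have hdf : Differentiable ℝ (fderiv ℝ G) :=
    (hG.fderiv_right (m := (⊤ : ℕ∞)) (by simp)).differentiable (by simp)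
  have hsym := second_derivative_symmetric
    (fun y => (hG.differentiable (by simp) y).hasFDerivAt) (hdf q).hasFDerivAt
    ((1 : ℝ), (0 : ℝ)) ((0 : ℝ), (1 : ℝ))
  show fderiv ℝ (fun q => fderiv ℝ G q (0, 1)) q (1, 0)
      = fderiv ℝ (fun q => fderiv ℝ G q (1, 0)) q (0, 1)
  rw [fderiv_part_apply G hG q _ _, fderiv_part_apply G hG q _ _, hsym]

lemma eX_eq (g : ℝ → ℝ → ℝ) (G : ℝ × ℝ → ℝ) (hG : Differentiable ℝ G)
    (hc : ∀ a b, g a b = G (a, b)) (x y : ℝ) : eX g x y = D1 G (x, y) := by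
  have he : (fun t => g t y) = fun t => G (t, y) := funext fun t => hc t y
  rw [eX, he]; exact (hasDerivAt_D1 G hG x y).deriv

lemma eY_eq (g : ℝ → ℝ → ℝ) (G : ℝ × ℝ → ℝ) (hG : Differentiable ℝ G)
    (hc : ∀ a b, g a b = G (a, b)) (x y : ℝ) : eY g x y = D2 G (x, y) := by
  have he : (fun t => g x t) = fun t => G (x, t) := funext fun t => hc x t
  rw [eY, he]; exact (hasDerivAt_D2 G hG x y).deriv

lemma pX_eq (g : ℝ → ℝ → ℝ → ℝ) (G : ℝ × ℝ × ℝ → ℝ) (hG : Differentiable ℝ G)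
    (hc : ∀ a b c, g a b c = G (a, b, c)) (x y p : ℝ) : pX g x y p = E1 G (x, y, p) := by
  have he : (fun t => g t y p) = fun t => G (t, y, p) := funext fun t => hc t y p
  rw [pX, he]; exact (hasDerivAt_E1 G hG x y p).deriv

lemma pY_eq (g : ℝ → ℝ → ℝ → ℝ) (G : ℝ × ℝ × ℝ → ℝ) (hG : Differentiable ℝ G)
    (hc : ∀ a b c, g a b c = G (a, b, c)) (x y p : ℝ) : pY g x y p = E2 G (x, y, p) := by
  have he : (fun t => g x t p) = fun t => G (x, t, p) := funext fun t => hc x t p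
  rw [pY, he]; exact (hasDerivAt_E2 G hG x y p).deriv

lemma pP_eq (g : ℝ → ℝ → ℝ → ℝ) (G : ℝ × ℝ × ℝ → ℝ) (hG : Differentiable ℝ G)
    (hc : ∀ a b c, g a b c = G (a, b, c)) (x y p : ℝ) : pP g x y p = E3 G (x, y, p) := by
  have he : (fun t => g x y t) = fun t => G (x, y, t) := funext fun t => hc x y t
  rw [pP, he]; exact (hasDerivAt_E3 G hG x y p).deriv


/-- if `x̄ = x + C`, `ȳ = η(x,y)` maps `y'' = f(x,y,y')` to the
Airy equation `ȳ'' = x̄ ȳ`, then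
`x + C = f_y - (1/2) f_xp - (1/2) f_pp f + (1/4) f_p² - (1/2) p f_yp`. -/
theorem statement12 (C : ℝ) (f : ℝ → ℝ → ℝ → ℝ) (η : ℝ → ℝ → ℝ)
    (hf : ContDiff ℝ (⊤ : ℕ∞) (fun q : ℝ × ℝ × ℝ => f q.1 q.2.1 q.2.2))
    (hη : ContDiff ℝ (⊤ : ℕ∞) (fun q : ℝ × ℝ => η q.1 q.2))
    (hηy : ∀ x y : ℝ, eY η x y ≠ 0)
    (hpde : ∀ x y p : ℝ,
      eX (eX η) x y + 2 * p * eX (eY η) x y + p^2 * eY (eY η) x y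
        + f x y p * eY η x y = (x + C) * η x y) :
    ∀ x y p : ℝ,
      x + C = pY f x y p - (1/2) * pX (pP f) x y p - (1/2) * pP (pP f) x y p * f x y p
        + (1/4) * (pP f x y p)^2 - (1/2) * p * pY (pP f) x y p := by
  obtain ⟨H, hH⟩ : ∃ H : ℝ × ℝ → ℝ, H = fun q : ℝ × ℝ => η q.1 q.2 := ⟨_, rfl⟩
  obtain ⟨F, hF⟩ : ∃ F : ℝ × ℝ × ℝ → ℝ, F = fun q : ℝ × ℝ × ℝ => f q.1 q.2.1 q.2.2 := ⟨_, rfl⟩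
  have hHs : ContDiff ℝ (⊤ : ℕ∞) H := hH ▸ hη
  have hFs : ContDiff ℝ (⊤ : ℕ∞) F := hF ▸ hf
  have hcH : ∀ a b, η a b = H (a, b) := by rw [hH]; exact fun _ _ => rfl
  have hcF : ∀ a b c, f a b c = F (a, b, c) := by rw [hF]; exact fun _ _ _ => rfl
  clear hH hF hη hf
  -- smoothness bookkeeping
  have hHd : Differentiable ℝ H := hHs.differentiable (by simp)
  have sD1H := D1_contDiff H hHs
  have sD2H := D2_contDiff H hHs
  have sD1D1H := D1_contDiff _ sD1H
  have sD1D2H := D1_contDiff _ sD2H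
  have sD2D2H := D2_contDiff _ sD2H
  have hFd : Differentiable ℝ F := hFs.differentiable (by simp)
  have sE3F := E3_contDiff F hFs
  have hE3Fd : Differentiable ℝ (E3 F) := sE3F.differentiable (by simp)
  -- conversions
  have c_eY : ∀ a b, eY η a b = D2 H (a, b) := fun a b => eY_eq η H hHd hcH a b
  have c_eX : ∀ a b, eX η a b = D1 H (a, b) := fun a b => eX_eq η H hHd hcH a b
  have c_eXeX : ∀ a b, eX (eX η) a b = D1 (D1 H) (a, b) :=
    fun a b => eX_eq (eX η) (D1 H) (sD1H.differentiable (by simp)) c_eX a b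
  have c_eXeY : ∀ a b, eX (eY η) a b = D1 (D2 H) (a, b) :=
    fun a b => eX_eq (eY η) (D2 H) (sD2H.differentiable (by simp)) c_eY a b
  have c_eYeY : ∀ a b, eY (eY η) a b = D2 (D2 H) (a, b) :=
    fun a b => eY_eq (eY η) (D2 H) (sD2H.differentiable (by simp)) c_eY a b
  have c_pP : ∀ a b c, pP f a b c = E3 F (a, b, c) := fun a b c => pP_eq f F hFd hcF a b c
  have c_pY : ∀ a b c, pY f a b c = E2 F (a, b, c) := fun a b c => pY_eq f F hFd hcF a b c
  have c_pXpP : ∀ a b c, pX (pP f) a b c = E1 (E3 F) (a, b, c) :=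
    fun a b c => pX_eq (pP f) (E3 F) hE3Fd c_pP a b c
  have c_pYpP : ∀ a b c, pY (pP f) a b c = E2 (E3 F) (a, b, c) :=
    fun a b c => pY_eq (pP f) (E3 F) hE3Fd c_pP a b c
  have c_pPpP : ∀ a b c, pP (pP f) a b c = E3 (E3 F) (a, b, c) :=
    fun a b c => pP_eq (pP f) (E3 F) hE3Fd c_pP a b c
  -- the PDE in fderiv language
  have P : ∀ x y p : ℝ, D1 (D1 H) (x, y) + 2 * p * D1 (D2 H) (x, y)
      + p^2 * D2 (D2 H) (x, y) + F (x, y, p) * D2 H (x, y) = (x + C) * H (x, y) := by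
    intro x y p
    have h := hpde x y p
    rw [c_eXeX x y, c_eXeY x y, c_eYeY x y, c_eY x y, hcF x y p, hcH x y] at h
    exact h
  -- (A) : ∂p of the PDE
  have hA : ∀ x y p : ℝ, 2 * D1 (D2 H) (x, y) + 2 * p * D2 (D2 H) (x, y)
      + E3 F (x, y, p) * D2 H (x, y) = 0 := by
    intro x y p
    have hsq : HasDerivAt (fun t : ℝ => t^2) (2 * p) p := by
      simpa using hasDerivAt_pow 2 p
    have hL := (((hasDerivAt_const p (D1 (D1 H) (x, y))).add
        (((hasDerivAt_id p).const_mul 2).mul_const (D1 (D2 H) (x, y)))).add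
        (hsq.mul_const (D2 (D2 H) (x, y)))).add
        ((hasDerivAt_E3 F hFd x y p).mul_const (D2 H (x, y)))
    have hR' : HasDerivAt (fun t : ℝ => D1 (D1 H) (x, y) + 2 * t * D1 (D2 H) (x, y)
        + t^2 * D2 (D2 H) (x, y) + F (x, y, t) * D2 H (x, y)) 0 p := by
      have he : (fun t : ℝ => D1 (D1 H) (x, y) + 2 * t * D1 (D2 H) (x, y)
          + t^2 * D2 (D2 H) (x, y) + F (x, y, t) * D2 H (x, y))
          = fun _ : ℝ => (x + C) * H (x, y) := funext fun t => P x y t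
      rw [he]; exact hasDerivAt_const _ _
    have h0 := hR'.unique hL
    linear_combination -h0
  -- (B) : ∂p of (A)
  have hB : ∀ x y p : ℝ, 2 * D2 (D2 H) (x, y) + E3 (E3 F) (x, y, p) * D2 H (x, y) = 0 := by
    intro x y p
    have hL := (((hasDerivAt_const p (2 * D1 (D2 H) (x, y))).add
        (((hasDerivAt_id p).const_mul 2).mul_const (D2 (D2 H) (x, y)))).add
        ((hasDerivAt_E3 (E3 F) hE3Fd x y p).mul_const (D2 H (x, y))))
    have hR' : HasDerivAt (fun t : ℝ => 2 * D1 (D2 H) (x, y) + 2 * t * D2 (D2 H) (x, y)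
        + E3 F (x, y, t) * D2 H (x, y)) 0 p := by
      have he : (fun t : ℝ => 2 * D1 (D2 H) (x, y) + 2 * t * D2 (D2 H) (x, y)
          + E3 F (x, y, t) * D2 H (x, y)) = fun _ : ℝ => (0 : ℝ) := funext fun t => hA x y t
      rw [he]; exact hasDerivAt_const _ _
    have h0 := hR'.unique hL
    linear_combination -h0
  -- (Ax) : ∂x of (A)
  have hAx : ∀ x y p : ℝ, 2 * D1 (D1 (D2 H)) (x, y) + 2 * p * D1 (D2 (D2 H)) (x, y)
      + (E1 (E3 F) (x, y, p) * D2 H (x, y) + E3 F (x, y, p) * D1 (D2 H) (x, y)) = 0 := by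
    intro x y p
    have hL := (((hasDerivAt_D1 (D1 (D2 H)) (sD1D2H.differentiable (by simp)) x y).const_mul 2).add
        ((hasDerivAt_D1 (D2 (D2 H)) (sD2D2H.differentiable (by simp)) x y).const_mul (2 * p))).add
        ((hasDerivAt_E1 (E3 F) hE3Fd x y p).mul
          (hasDerivAt_D1 (D2 H) (sD2H.differentiable (by simp)) x y))
    have hR' : HasDerivAt (fun t : ℝ => 2 * D1 (D2 H) (t, y) + 2 * p * D2 (D2 H) (t, y)
        + E3 F (t, y, p) * D2 H (t, y)) 0 x := by
      have he : (fun t : ℝ => 2 * D1 (D2 H) (t, y) + 2 * p * D2 (D2 H) (t, y)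
          + E3 F (t, y, p) * D2 H (t, y)) = fun _ : ℝ => (0 : ℝ) := funext fun t => hA t y p
      rw [he]; exact hasDerivAt_const _ _
    have h0 := hR'.unique hL
    linear_combination -h0
  -- (Ay) : ∂y of (A)
  have hAy : ∀ x y p : ℝ, 2 * D2 (D1 (D2 H)) (x, y) + 2 * p * D2 (D2 (D2 H)) (x, y)
      + (E2 (E3 F) (x, y, p) * D2 H (x, y) + E3 F (x, y, p) * D2 (D2 H) (x, y)) = 0 := by
    intro x y p
    have hL := (((hasDerivAt_D2 (D1 (D2 H)) (sD1D2H.differentiable (by simp)) x y).const_mul 2).add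
        ((hasDerivAt_D2 (D2 (D2 H)) (sD2D2H.differentiable (by simp)) x y).const_mul (2 * p))).add
        ((hasDerivAt_E2 (E3 F) hE3Fd x y p).mul
          (hasDerivAt_D2 (D2 H) (sD2H.differentiable (by simp)) x y))
    have hR' : HasDerivAt (fun t : ℝ => 2 * D1 (D2 H) (x, t) + 2 * p * D2 (D2 H) (x, t)
        + E3 F (x, t, p) * D2 H (x, t)) 0 y := by
      have he : (fun t : ℝ => 2 * D1 (D2 H) (x, t) + 2 * p * D2 (D2 H) (x, t)
          + E3 F (x, t, p) * D2 H (x, t)) = fun _ : ℝ => (0 : ℝ) := funext fun t => hA x t p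
      rw [he]; exact hasDerivAt_const _ _
    have h0 := hR'.unique hL
    linear_combination -h0
  -- (Y) : ∂y of the PDE
  have hY : ∀ x y p : ℝ, D2 (D1 (D1 H)) (x, y) + 2 * p * D2 (D1 (D2 H)) (x, y)
      + p^2 * D2 (D2 (D2 H)) (x, y)
      + (E2 F (x, y, p) * D2 H (x, y) + F (x, y, p) * D2 (D2 H) (x, y))
      = (x + C) * D2 H (x, y) := by
    intro x y p
    have hL := (((hasDerivAt_D2 (D1 (D1 H)) (sD1D1H.differentiable (by simp)) x y).add
        ((hasDerivAt_D2 (D1 (D2 H)) (sD1D2H.differentiable (by simp)) x y).const_mul (2 * p))).add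
        ((hasDerivAt_D2 (D2 (D2 H)) (sD2D2H.differentiable (by simp)) x y).const_mul (p^2))).add
        ((hasDerivAt_E2 F hFd x y p).mul
          (hasDerivAt_D2 (D2 H) (sD2H.differentiable (by simp)) x y))
    have hR' : HasDerivAt (fun t : ℝ => D1 (D1 H) (x, t) + 2 * p * D1 (D2 H) (x, t)
        + p^2 * D2 (D2 H) (x, t) + F (x, t, p) * D2 H (x, t))
        ((x + C) * D2 H (x, y)) y := by
      have he : (fun t : ℝ => D1 (D1 H) (x, t) + 2 * p * D1 (D2 H) (x, t)
          + p^2 * D2 (D2 H) (x, t) + F (x, t, p) * D2 H (x, t))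
          = fun t : ℝ => (x + C) * H (x, t) := funext fun t => P x t p
      rw [he]; exact (hasDerivAt_D2 H hHd x y).const_mul (x + C)
    have h0 := hR'.unique hL
    linear_combination -h0
  -- main computation
  intro x y p
  have hw : D2 H (x, y) ≠ 0 := by rw [← c_eY x y]; exact hηy x y
  -- symmetry facts
  have sym2 : D1 (D2 (D2 H)) (x, y) = D2 (D1 (D2 H)) (x, y) := D_symm (D2 H) sD2H (x, y)
  have sym1 : D2 (D1 (D1 H)) (x, y) = D1 (D1 (D2 H)) (x, y) := by
    have s1a : D2 (D1 (D1 H)) (x, y) = D1 (D2 (D1 H)) (x, y) :=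
      (D_symm (D1 H) sD1H (x, y)).symm
    have s1b : D2 (D1 H) = D1 (D2 H) := funext fun q => (D_symm H hHs q).symm
    rw [s1a]
    exact congrArg (fun G => D1 G (x, y)) s1b
  rw [c_pY x y p, c_pXpP x y p, c_pPpP x y p, c_pYpP x y p, c_pP x y p, hcF x y p]
  have key : (x + C) * D2 H (x, y)
      = (E2 F (x, y, p) - (1/2) * E1 (E3 F) (x, y, p)
        - (1/2) * E3 (E3 F) (x, y, p) * F (x, y, p) + (1/4) * (E3 F (x, y, p))^2
        - (1/2) * p * E2 (E3 F) (x, y, p)) * D2 H (x, y) := by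
    linear_combination (-1 : ℝ) * hY x y p + (1/2) * hAx x y p
      + (1/2) * F (x, y, p) * hB x y p - (1/4) * E3 F (x, y, p) * hA x y p
      + (1/2) * p * hAy x y p + sym1 - p * sym2
  exact mul_right_cancel₀ hw key
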